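/- The flip graph of triangulations of a convex n-gon is connected for every n ≥ 3. -/

import Mathlib

def IsPolygonDiagonal (n : ℕ) (p : Fin n × Fin n) : Prop :=
  p.1.val + 2 ≤ p.2.val ∧ ¬(p.1.val = 0 ∧ p.2.val = n - 1)

def Crossing (n : ℕ) (p q : Fin n × Fin n) : Prop :=
  (p.1 < q.1 ∧ q.1 < p.2 ∧ p.2 < q.2) ∨ (q.1 < p.1 ∧ p.1 < q.2 ∧ q.2 < p.2)

def IsTriangulation (n : ℕ) (S : Finset (Fin n × Fin n)) : Prop :=
  (∀ p ∈ S, IsPolygonDiagonal n p) ∧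
  (∀ p ∈ S, ∀ q ∈ S, ¬ Crossing n p q) ∧
  (∀ p, IsPolygonDiagonal n p → p ∉ S → ∃ q ∈ S, Crossing n p q)

/-- The flip graph of the convex `n`-gon: two triangulations are adjacent iff they
differ by exactly one diagonal (a flip inside a quadrilateral). -/
def flipGraph (n : ℕ) : SimpleGraph {S : Finset (Fin n × Fin n) // IsTriangulation n S} where
  Adj S T := (S.1 \ T.1).card = 1 ∧ (T.1 \ S.1).card = 1
  symm := by constructor; intro S T h; exact ⟨h.2, h.1⟩
  loopless := by constructor; intro S h; simp at h

/-!
Every triangulation is joined by flips to the fan at vertex `0`. If some diagonal avoids `0`,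
take such a diagonal `(a, b)` with `b - a` maximal. Then `0 a b` is a triangle of the
triangulation, and so is `a w b` for some apex `a < w < b`. Flipping `(a, b)` inside the
quadrilateral `0 a w b` replaces it by `(0, w)`, so the number of diagonals avoiding `0` drops.
-/

variable {n : ℕ}

lemma Crossing.symm {p q : Fin n × Fin n} (h : Crossing n p q) : Crossing n q p := by
  unfold Crossing at *
  tauto

def IsPolygonSide (n : ℕ) (p : Fin n × Fin n) : Prop :=
  p.1.val + 1 = p.2.val ∨ (p.1.val = 0 ∧ p.2.val = n - 1)

lemma not_crossing_of_isPolygonSide {p e : Fin n × Fin n} (he : IsPolygonSide n e) :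
    ¬ Crossing n p e := by
  have := p.2.isLt
  unfold IsPolygonSide at he
  unfold Crossing
  omega

def IsEdgeOf (n : ℕ) (S : Finset (Fin n × Fin n)) (e : Fin n × Fin n) : Prop :=
  IsPolygonSide n e ∨ e ∈ S

def quadSides (u a w b : Fin n) : List (Fin n × Fin n) :=
  [(u, a), (a, w), (w, b), (u, b)]

section Quadrilateral

variable {u a w b : Fin n} (hquad : u < a ∧ a < w ∧ w < b) (p : Fin n × Fin n)
include hquad

lemma eq_or_crossing_quadSides_of_crossing_ab (h : Crossing n p (a, b)) :
    p = (u, w) ∨ ∃ e ∈ quadSides u a w b, Crossing n p e := by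
  obtain ⟨c, d⟩ := p
  simp only [quadSides, List.exists_mem_cons_iff, List.not_mem_nil, false_and, exists_false,
    or_false, Prod.ext_iff, Crossing] at h ⊢
  omega

lemma eq_or_crossing_quadSides_of_crossing_uw (h : Crossing n p (u, w)) :
    p = (a, b) ∨ ∃ e ∈ quadSides u a w b, Crossing n p e := by
  obtain ⟨c, d⟩ := p
  simp only [quadSides, List.exists_mem_cons_iff, List.not_mem_nil, false_and, exists_false,
    or_false, Prod.ext_iff, Crossing] at h ⊢
  omega

end Quadrilateral

lemma flipGraph_adj_of_eq_insert_erase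
    {S T : {S : Finset (Fin n × Fin n) // IsTriangulation n S}} {x y : Fin n × Fin n}
    (hT : T.1 = insert x (S.1.erase y)) (hy : y ∈ S.1) (hx : x ∉ S.1) :
    (flipGraph n).Adj S T := by
  have hST : S.1 \ T.1 = {y} := by
    rw [hT, Finset.sdiff_insert, Finset.sdiff_erase_self hy]
    exact Finset.erase_eq_of_notMem fun h => hx (Finset.mem_singleton.mp h ▸ hy)
  have hTS : T.1 \ S.1 = {x} := by
    rw [hT, Finset.insert_sdiff_of_notMem _ hx, Finset.sdiff_eq_empty_iff_subset.mpr
      (Finset.erase_subset y S.1)]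
    rfl
  exact ⟨by rw [hST, Finset.card_singleton], by rw [hTS, Finset.card_singleton]⟩

lemma not_crossing_of_fst_eq {p q : Fin n × Fin n} (h : p.1 = q.1) : ¬ Crossing n p q := by
  unfold Crossing
  omega

def fan (n : ℕ) : Finset (Fin n × Fin n) :=
  Finset.univ.filter fun p => p.1.val = 0 ∧ 2 ≤ p.2.val ∧ p.2.val + 2 ≤ n

lemma mem_fan {p : Fin n × Fin n} : p ∈ fan n ↔ p.1.val = 0 ∧ IsPolygonDiagonal n p := by
  have := p.2.isLt
  simp only [fan, Finset.mem_filter, Finset.mem_univ, true_and, IsPolygonDiagonal]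
  omega

lemma isTriangulation_fan (n : ℕ) : IsTriangulation n (fan n) := by
  refine ⟨fun p hp => (mem_fan.mp hp).2, fun p hp q hq => ?_, fun p hp hpfan => ?_⟩
  · exact not_crossing_of_fst_eq (Fin.ext ((mem_fan.mp hp).1.trans (mem_fan.mp hq).1.symm))
  · have hp0 : p.1.val ≠ 0 := fun h => hpfan (mem_fan.mpr ⟨h, hp⟩)
    obtain ⟨x, y⟩ := p
    simp only [IsPolygonDiagonal] at hp hp0
    refine ⟨(⟨0, by omega⟩, ⟨x + 1, by omega⟩), mem_fan.mpr ⟨rfl, ?_⟩, ?_⟩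
    · simp only [IsPolygonDiagonal]
      omega
    · simp only [Crossing, Fin.lt_def]
      omega

namespace IsTriangulation

variable {S : Finset (Fin n × Fin n)} (hS : IsTriangulation n S)
include hS

lemma not_crossing_of_isEdgeOf {e q : Fin n × Fin n} (he : IsEdgeOf n S e) (hq : q ∈ S) :
    ¬ Crossing n q e := by
  rcases he with he | he
  · exact not_crossing_of_isPolygonSide he
  · exact hS.2.1 q hq e he

lemma isEdgeOf_of_forall_not_crossing {e : Fin n × Fin n} (hlt : e.1 < e.2)
    (h : ∀ q ∈ S, ¬ Crossing n e q) : IsEdgeOf n S e := by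
  by_contra hne
  have hside : ¬ IsPolygonSide n e := fun hs => hne (Or.inl hs)
  have hdiag : IsPolygonDiagonal n e := by
    unfold IsPolygonSide at hside
    unfold IsPolygonDiagonal
    omega
  obtain ⟨q, hq, hcross⟩ := hS.2.2 e hdiag fun he => hne (Or.inr he)
  exact h q hq hcross

lemma exists_apex {a b : Fin n} (hab : (a, b) ∈ S) :
    ∃ w, a < w ∧ w < b ∧ IsEdgeOf n S (a, w) ∧ IsEdgeOf n S (w, b) := by
  classical
  have hdiag := hS.1 _ hab
  simp only [IsPolygonDiagonal] at hdiag
  let W := Finset.univ.filter fun w : Fin n => a < w ∧ w < b ∧ IsEdgeOf n S (a, w)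
  have hW : W.Nonempty := ⟨⟨a + 1, by omega⟩, Finset.mem_filter.mpr
    ⟨Finset.mem_univ _, Fin.lt_def.mpr (Nat.lt_succ_self _), Fin.lt_def.mpr (show a.val + 1 < b by omega),
      Or.inl (Or.inl rfl)⟩⟩
  obtain ⟨w, hw, hmax⟩ := W.exists_max_image id hW
  simp only [W, Finset.mem_filter, Finset.mem_univ, true_and, id] at hw hmax
  obtain ⟨haw, hwb, hedge⟩ := hw
  refine ⟨w, haw, hwb, hedge, hS.isEdgeOf_of_forall_not_crossing hwb ?_⟩
  rintro ⟨c, d⟩ hq hcross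
  have hab' := hS.2.1 _ hq _ hab
  have haw' := hS.not_crossing_of_isEdgeOf hedge hq
  simp only [Crossing] at hcross hab' haw'
  -- the only crossing left is by a diagonal `(a, d)` with `w < d < b`, against the choice of `w`
  obtain rfl : c = a := by omega
  have := hmax d ⟨by omega, by omega, Or.inr hq⟩
  omega

lemma flip {u a w b : Fin n} (hquad : u < a ∧ a < w ∧ w < b)
    (hsides : ∀ e ∈ quadSides u a w b, IsEdgeOf n S e) :
    IsTriangulation n (insert (u, w) (S.erase (a, b))) := by
  have hb := b.isLt
  have hnew : ∀ q ∈ S.erase (a, b), ¬ Crossing n q (u, w) := fun q hq hcross => by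
    rcases eq_or_crossing_quadSides_of_crossing_uw hquad q hcross with rfl | ⟨e, he, hqe⟩
    · exact Finset.notMem_erase _ _ hq
    · exact hS.not_crossing_of_isEdgeOf (hsides e he) (Finset.mem_of_mem_erase hq) hqe
  refine ⟨?_, ?_, ?_⟩
  · intro p hp
    rcases Finset.mem_insert.mp hp with rfl | hp
    · simp only [IsPolygonDiagonal]
      omega
    · exact hS.1 p (Finset.mem_of_mem_erase hp)
  · intro p hp q hq
    rcases Finset.mem_insert.mp hp with rfl | hp <;> rcases Finset.mem_insert.mp hq with rfl | hq
    · simp only [Crossing]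
      omega
    · exact fun h => hnew q hq h.symm
    · exact hnew p hp
    · exact hS.2.1 p (Finset.mem_of_mem_erase hp) q (Finset.mem_of_mem_erase hq)
  · intro p hp hpT
    by_cases hpab : p = (a, b)
    · subst hpab
      refine ⟨(u, w), Finset.mem_insert_self _ _, ?_⟩
      simp only [Crossing]
      omega
    have hpS : p ∉ S := fun h => hpT (Finset.mem_insert_of_mem (Finset.mem_erase.mpr ⟨hpab, h⟩))
    obtain ⟨q, hq, hpq⟩ := hS.2.2 p hp hpS
    by_cases hqab : q = (a, b)
    · subst hqab
      rcases eq_or_crossing_quadSides_of_crossing_ab hquad p hpq with rfl | ⟨e, he, hpe⟩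
      · exact absurd (Finset.mem_insert_self _ _) hpT
      have heS : e ∈ S :=
        (hsides e he).resolve_left fun hside => not_crossing_of_isPolygonSide hside hpe
      have heab : e ≠ (a, b) := by
        rintro rfl
        simp only [quadSides, List.mem_cons, List.not_mem_nil, or_false, Prod.ext_iff] at he
        omega
      exact ⟨e, Finset.mem_insert_of_mem (Finset.mem_erase.mpr ⟨heab, heS⟩), hpe⟩
    · exact ⟨q, Finset.mem_insert_of_mem (Finset.mem_erase.mpr ⟨hqab, hq⟩), hpq⟩

lemma exists_adj_card_filter_lt (hex : ∃ p ∈ S, p.1.val ≠ 0) :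
    ∃ T, ∃ hT : IsTriangulation n T, (flipGraph n).Adj ⟨S, hS⟩ ⟨T, hT⟩ ∧
      (T.filter fun p => p.1.val ≠ 0).card < (S.filter fun p => p.1.val ≠ 0).card := by
  obtain ⟨p, hp, hp0⟩ := hex
  obtain ⟨⟨a, b⟩, habF, hmax⟩ := (S.filter fun p => p.1.val ≠ 0).exists_max_image
    (fun p => p.2.val - p.1.val) ⟨p, Finset.mem_filter.mpr ⟨hp, hp0⟩⟩
  obtain ⟨hab, ha0⟩ := Finset.mem_filter.mp habF
  have hdiag := hS.1 _ hab
  simp only [IsPolygonDiagonal] at hdiag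
  let z : Fin n := ⟨0, by omega⟩
  -- a diagonal crossing `(0, a)` or `(0, b)` but not `(a, b)` would be longer than `(a, b)`
  have houter : ∀ q ∈ S, ¬ Crossing n (z, a) q ∧ ¬ Crossing n (z, b) q := by
    rintro ⟨c, d⟩ hq
    have hqab := hS.2.1 _ hq _ hab
    by_cases hc : c.val = 0
    · simp only [Crossing, z, Fin.lt_def]
      omega
    have := hmax _ (Finset.mem_filter.mpr ⟨hq, hc⟩)
    simp only [Crossing, z, Fin.lt_def] at hqab this ⊢
    omega
  obtain ⟨w, haw, hwb, haw_edge, hwb_edge⟩ := hS.exists_apex hab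
  have hquad : z < a ∧ a < w ∧ w < b := ⟨Fin.lt_def.mpr (Nat.pos_of_ne_zero ha0), haw, hwb⟩
  have hsides : ∀ e ∈ quadSides z a w b, IsEdgeOf n S e := by
    simp only [quadSides, List.forall_mem_cons, List.not_mem_nil, IsEmpty.forall_iff,
      implies_true, and_true]
    exact ⟨hS.isEdgeOf_of_forall_not_crossing hquad.1 fun q hq => (houter q hq).1, haw_edge,
      hwb_edge, hS.isEdgeOf_of_forall_not_crossing (hquad.1.trans (haw.trans hwb))
        fun q hq => (houter q hq).2⟩
  have hzw : (z, w) ∉ S := fun h => hS.2.1 _ h _ hab (by simp only [Crossing]; omega)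
  refine ⟨_, hS.flip hquad hsides, flipGraph_adj_of_eq_insert_erase rfl hab hzw, ?_⟩
  rw [Finset.filter_insert, if_neg (not_not.mpr rfl), Finset.filter_erase,
    Finset.card_erase_of_mem habF]
  exact Nat.sub_lt (Finset.card_pos.mpr ⟨_, habF⟩) one_pos

lemma eq_fan (h0 : ∀ p ∈ S, p.1.val = 0) : S = fan n := by
  ext p
  refine ⟨fun hp => mem_fan.mpr ⟨h0 p hp, hS.1 p hp⟩, fun hp => ?_⟩
  by_contra hpS
  obtain ⟨q, hq, hpq⟩ := hS.2.2 p (mem_fan.mp hp).2 hpS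
  exact not_crossing_of_fst_eq (Fin.ext ((mem_fan.mp hp).1.trans (h0 q hq).symm)) hpq

lemma reachable_fan : (flipGraph n).Reachable ⟨S, hS⟩ ⟨fan n, isTriangulation_fan n⟩ := by
  induction hk : (S.filter fun p => p.1.val ≠ 0).card using Nat.strong_induction_on
    generalizing S with
  | _ k ih =>
    by_cases hex : ∃ p ∈ S, p.1.val ≠ 0
    · obtain ⟨T, hT, hadj, hlt⟩ := hS.exists_adj_card_filter_lt hex
      exact hadj.reachable.trans (ih _ (hk ▸ hlt) hT rfl)
    · push Not at hex
      obtain rfl := hS.eq_fan hex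
      rfl

end IsTriangulation

theorem flipGraph_connected_general (n : ℕ) : (flipGraph n).Connected :=
  have : Nonempty {S // IsTriangulation n S} := ⟨⟨fan n, isTriangulation_fan n⟩⟩
  ⟨fun S T => S.2.reachable_fan.trans T.2.reachable_fan.symm⟩

/-- The flip graph of triangulations of a convex `n`-gon is connected for all `n ≥ 3`. -/
theorem flipGraph_connected (n : ℕ) (hn : 3 ≤ n) : (flipGraph n).Connected :=
  flipGraph_connected_general n
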